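/- (Lemma 6) Fix i ∈ {0, …, n−1}, b ∈ {1, …, d−k+h}, and a helper set R ⊆ {0, …, n−1} \ {i} with |R| = d. If two codewords c, c' ∈ C satisfy c_{u,b,a} = c'_{u,b,a} for all u ∈ R and all a ∈ V_i, then (1) c_{j,b,a} = c'_{j,b,a} for all j ∈ {0, …, n−1} and all a ∈ V_i, and (2) c_{i,b,a} = c'_{i,b,a} for all a ∈ {0, …, s−1}^n. -/

import Mathlib

/-!
Pass to the difference `f = c - c'`, again a codeword, which vanishes on the helpers' symbols in
`V_i`. Fix `a ∈ V_i`. Besides the known helper symbols, the parity checks at `a` involve the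
unknowns `f_{j,b,a}` (`j ∉ R`) and `f_{i,b,a(i,e)}` (`e ≠ 0`), plus coupling terms
`f_{j,b,a(j,e)}` with `j ≠ i`, `a_j = 0`; those sit at points of `V_i` with one zero coordinate
fewer, so they vanish by induction on the number of zero coordinates. What is left is a
Vandermonde system in the `(n - d) + (s - 1) = r` distinct points `λ_j`, `μ_e` and `r` equations,
so every unknown vanishes.
-/

open Finset

/-- The code `C` of Construction 1: arrays `c = (c_{i,b,a})` with `i ∈ [0,n)`,
`b ∈ {1,…,B}` (here `B = d-k+h`; entries of `c` with `b` outside this range are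
irrelevant), and `a ∈ {0,…,s-1}^n`, satisfying the parity-check equations
`∑_i λ_i^t c_{i,b,a} + ∑_i δ(a_i) ∑_{e=1}^{s-1} μ_e^t c_{i,b,a(i,e)} = 0`
for all `t ∈ [0,r)`, all `b ∈ {1,…,B}`, and all `a`. -/
def codeC {F : Type*} [Field F] (n r s B : ℕ) (lam : Fin n → F) (mu : Fin s → F)
    (c : Fin n → ℕ → (Fin n → Fin s) → F) : Prop :=
  ∀ t < r, ∀ b : ℕ, 1 ≤ b → b ≤ B → ∀ a : Fin n → Fin s,
    ∑ i, lam i ^ t * c i b a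
      + ∑ i, (if (a i : ℕ) = 0 then
          ∑ e ∈ univ.filter (fun e : Fin s => (e : ℕ) ≠ 0),
            mu e ^ t * c i b (Function.update a i e)
        else 0) = 0

theorem Finset.card_filter_update_lt {ι β : Type*} [Fintype ι] [DecidableEq ι]
    {p : β → Prop} [DecidablePred p] {a : ι → β} {j : ι} {e : β} (hpa : p (a j)) (hpe : ¬p e) :
    #{x | p (Function.update a j e x)} < #{x | p (a x)} := by
  refine card_lt_card ((ssubset_iff_of_subset fun x hx => ?_).2
    ⟨j, by simpa using hpa, by simpa using hpe⟩)
  simp only [mem_filter, mem_univ, true_and] at hx ⊢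
  rcases eq_or_ne x j with rfl | hne
  · simp only [Function.update_self] at hx
    exact absurd hx hpe
  · rwa [Function.update_of_ne hne] at hx

theorem Finset.eq_zero_of_forall_sum_pow_mul_eq_zero {R ι : Type*} [CommRing R] [IsDomain R]
    {S : Finset ι} {α v : ι → R} {r : ℕ} (hα : Set.InjOn α S) (hS : #S ≤ r)
    (h : ∀ t < r, ∑ x ∈ S, α x ^ t * v x = 0) : ∀ x ∈ S, v x = 0 := by
  set e := S.equivFin
  have hv : (fun k => v (e.symm k)) = 0 := by
    refine Matrix.eq_zero_of_forall_pow_sum_mul_pow_eq_zero (f := fun k => α (e.symm k))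
      ((Set.injOn_iff_injective.1 hα).comp e.symm.injective) fun t => ?_
    rw [← h t (by omega), ← S.sum_coe_sort, ← e.symm.sum_comp]
    simp only [mul_comm]
  intro x hx
  simpa using congrFun hv (e ⟨x, hx⟩)

section ParityCheck

variable {F : Type*} [Field F] {n r s B : ℕ} {lam : Fin n → F} {mu : Fin s → F}

theorem codeC.sub {c c' : Fin n → ℕ → (Fin n → Fin s) → F}
    (hc : codeC n r s B lam mu c) (hc' : codeC n r s B lam mu c') :
    codeC n r s B lam mu (c - c') := by
  intro t ht b hb hb' a
  have h := hc t ht b hb hb' a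
  have h' := hc' t ht b hb hb' a
  simp only [← sum_filter, Pi.sub_apply, mul_sub, sum_sub_distrib] at h h' ⊢
  linear_combination h - h'

theorem Fin.card_filter_val_ne_zero (s : ℕ) :
    #(univ.filter fun e : Fin s => (e : ℕ) ≠ 0) = s - 1 := by
  rcases s with _ | s
  · simp
  · simp [filter_ne']

theorem eq_zero_of_sum_pow_mul_add_sum_pow_mul_eq_zero
    (hlam : Function.Injective lam)
    (hmu : ∀ e e' : Fin s, (e : ℕ) ≠ 0 → (e' : ℕ) ≠ 0 → mu e = mu e' → e = e')
    (hlammu : ∀ (i : Fin n) (e : Fin s), (e : ℕ) ≠ 0 → lam i ≠ mu e)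
    {S : Finset (Fin n)} (hS : #S + (s - 1) ≤ r) {x : Fin n → F} {y : Fin s → F}
    (h : ∀ t < r, ∑ j ∈ S, lam j ^ t * x j
      + ∑ e ∈ univ.filter (fun e : Fin s => (e : ℕ) ≠ 0), mu e ^ t * y e = 0) :
    (∀ j ∈ S, x j = 0) ∧ ∀ e : Fin s, (e : ℕ) ≠ 0 → y e = 0 := by
  have hinj : Set.InjOn (Sum.elim lam mu)
      (S.disjSum (univ.filter fun e : Fin s => (e : ℕ) ≠ 0)) := by
    rintro (j | e) hx (j' | e') hy hxy <;>
      simp only [mem_coe, inl_mem_disjSum, inr_mem_disjSum, mem_filter, mem_univ, true_and,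
        Sum.elim_inl, Sum.elim_inr] at hx hy hxy
    · rw [hlam hxy]
    · exact absurd hxy (hlammu j e' hy)
    · exact absurd hxy.symm (hlammu j' e hx)
    · rw [hmu e e' hx hy hxy]
  have hzero := eq_zero_of_forall_sum_pow_mul_eq_zero (r := r) (v := Sum.elim x y)
    hinj (by rwa [card_disjSum, Fin.card_filter_val_ne_zero]) fun t ht => by
      simpa [sum_disjSum] using h t ht
  exact ⟨fun j hj => hzero (.inl j) (inl_mem_disjSum.2 hj),
    fun e he => hzero (.inr e) (inr_mem_disjSum.2 (by simpa using he))⟩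

theorem codeC.sum_compl_add_sum_eq_zero {f : Fin n → ℕ → (Fin n → Fin s) → F}
    (hf : codeC n r s B lam mu f) {b : ℕ} (hb : 1 ≤ b) (hb' : b ≤ B) {i : Fin n}
    {R : Finset (Fin n)} {a : Fin n → Fin s} (hai : (a i : ℕ) = 0) (hR : ∀ u ∈ R, f u b a = 0)
    (hcouple : ∀ j ≠ i, (a j : ℕ) = 0 → ∀ e : Fin s, (e : ℕ) ≠ 0 →
      f j b (Function.update a j e) = 0) :
    ∀ t < r, ∑ j ∈ Rᶜ, lam j ^ t * f j b a
      + ∑ e ∈ univ.filter (fun e : Fin s => (e : ℕ) ≠ 0),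
          mu e ^ t * f i b (Function.update a i e) = 0 := by
  intro t ht
  have hcoupling : ∑ j, (if (a j : ℕ) = 0 then
        ∑ e ∈ univ.filter (fun e : Fin s => (e : ℕ) ≠ 0), mu e ^ t * f j b (Function.update a j e)
      else 0) = ∑ e ∈ univ.filter (fun e : Fin s => (e : ℕ) ≠ 0),
        mu e ^ t * f i b (Function.update a i e) := by
    rw [sum_eq_single i (fun j _ hji => ?_) (by simp), if_pos hai]
    split_ifs with haj
    · exact sum_eq_zero fun e he => by rw [hcouple j hji haj e (mem_filter.1 he).2, mul_zero]
    · rfl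
  have h := hf t ht b hb hb' a
  rwa [← sum_compl_add_sum R, sum_eq_zero (s := R) (fun u hu => by rw [hR u hu, mul_zero]),
    add_zero, hcoupling] at h

theorem codeC.eq_zero_of_eq_zero_on_helpers
    (hlam : Function.Injective lam)
    (hmu : ∀ e e' : Fin s, (e : ℕ) ≠ 0 → (e' : ℕ) ≠ 0 → mu e = mu e' → e = e')
    (hlammu : ∀ (i : Fin n) (e : Fin s), (e : ℕ) ≠ 0 → lam i ≠ mu e)
    {f : Fin n → ℕ → (Fin n → Fin s) → F} (hf : codeC n r s B lam mu f) {b : ℕ} (hb : 1 ≤ b)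
    (hb' : b ≤ B) {i : Fin n} {R : Finset (Fin n)} (hrank : #Rᶜ + (s - 1) ≤ r)
    (hR : ∀ u ∈ R, ∀ a : Fin n → Fin s, (a i : ℕ) = 0 → f u b a = 0)
    (a : Fin n → Fin s) (hai : (a i : ℕ) = 0) :
    (∀ j, f j b a = 0) ∧ ∀ e : Fin s, (e : ℕ) ≠ 0 → f i b (Function.update a i e) = 0 := by
  induction hm : #{j | (a j : ℕ) = 0} using Nat.strong_induction_on generalizing a with
  | _ m ih =>
  have hcouple : ∀ j ≠ i, (a j : ℕ) = 0 → ∀ e : Fin s, (e : ℕ) ≠ 0 →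
      f j b (Function.update a j e) = 0 := fun j hji haj e he =>
    have hfewer := hm ▸ card_filter_update_lt (p := fun x : Fin s => (x : ℕ) = 0) haj he
    (ih _ hfewer _ (by rwa [Function.update_of_ne hji.symm]) rfl).1 j
  obtain ⟨hcompl, hi⟩ := eq_zero_of_sum_pow_mul_add_sum_pow_mul_eq_zero hlam hmu hlammu hrank
    (hf.sum_compl_add_sum_eq_zero hb hb' hai (fun u hu => hR u hu a hai) hcouple)
  exact ⟨fun j => if hj : j ∈ R then hR j hj a hai else hcompl j (mem_compl.2 hj), hi⟩

end ParityCheck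

theorem single_layer_repair_general
    {F : Type*} [Field F]
    (n k d h r s : ℕ)
    (hnk : n = k + r) (hkd : k < d) (hdn : d + h ≤ n)
    (hs : s = d - k + 1)
    (lam : Fin n → F) (mu : Fin s → F)
    (hlam : Function.Injective lam)
    (hmu : ∀ e e' : Fin s, (e : ℕ) ≠ 0 → (e' : ℕ) ≠ 0 → mu e = mu e' → e = e')
    (hlammu : ∀ (i : Fin n) (e : Fin s), (e : ℕ) ≠ 0 → lam i ≠ mu e)
    (c c' : Fin n → ℕ → (Fin n → Fin s) → F)
    (hc : codeC n r s (d - k + h) lam mu c) (hc' : codeC n r s (d - k + h) lam mu c')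
    (i : Fin n) (b : ℕ) (hb : 1 ≤ b) (hb' : b ≤ d - k + h)
    (R : Finset (Fin n)) (hR : R.card = d)
    (hdownload : ∀ u ∈ R, ∀ a : Fin n → Fin s, (a i : ℕ) = 0 →
      c u b a = c' u b a) :
    (∀ j : Fin n, ∀ a : Fin n → Fin s, (a i : ℕ) = 0 → c j b a = c' j b a)
      ∧ (∀ a : Fin n → Fin s, c i b a = c' i b a) := by
  have hrank : #Rᶜ + (s - 1) ≤ r := by
    rw [card_compl, Fintype.card_fin, hR]
    omega
  have hzero := (hc.sub hc').eq_zero_of_eq_zero_on_helpers hlam hmu hlammu hb hb' hrank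
    fun u hu a hai => sub_eq_zero.2 (hdownload u hu a hai)
  have hV : ∀ j a, (a i : ℕ) = 0 → c j b a = c' j b a :=
    fun j a hai => sub_eq_zero.1 ((hzero a hai).1 j)
  refine ⟨hV, fun a => ?_⟩
  by_cases hai : (a i : ℕ) = 0
  · exact hV i a hai
  · simpa [sub_eq_zero] using
      (hzero (Function.update a i ⟨0, (a i).pos⟩) (by simp)).2 (a i) hai

/-- Lemma 6: if two codewords of `C` agree on the layer-`b` symbols `c_{u,b,a}`
for all helper nodes `u ∈ R` (`|R| = d`, `i ∉ R`) and all `a ∈ V_i`, then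
(1) they agree on `c_{j,b,a}` for every node `j` and every `a ∈ V_i`, and
(2) they agree on all of node `i`'s layer-`b` symbols `c_{i,b,a}`,
`a ∈ {0,…,s-1}^n`. -/
theorem single_layer_repair
    {F : Type*} [Field F] [Fintype F]
    (n k d h r s N : ℕ) (hk0 : 0 < k) (hr0 : 0 < r) (hh : 1 ≤ h)
    (hnk : n = k + r) (hkd : k < d) (hdn : d + h ≤ n)
    (hs : s = d - k + 1) (hN : N = (d - k + h) * s ^ n)
    (lam : Fin n → F) (mu : Fin s → F)
    (hlam : Function.Injective lam)
    (hmu : ∀ e e' : Fin s, (e : ℕ) ≠ 0 → (e' : ℕ) ≠ 0 → mu e = mu e' → e = e')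
    (hlammu : ∀ (i : Fin n) (e : Fin s), (e : ℕ) ≠ 0 → lam i ≠ mu e)
    (c c' : Fin n → ℕ → (Fin n → Fin s) → F)
    (hc : codeC n r s (d - k + h) lam mu c) (hc' : codeC n r s (d - k + h) lam mu c')
    (i : Fin n) (b : ℕ) (hb : 1 ≤ b) (hb' : b ≤ d - k + h)
    (R : Finset (Fin n)) (hiR : i ∉ R) (hR : R.card = d)
    (hdownload : ∀ u ∈ R, ∀ a : Fin n → Fin s, (a i : ℕ) = 0 →
      c u b a = c' u b a) :
    (∀ j : Fin n, ∀ a : Fin n → Fin s, (a i : ℕ) = 0 → c j b a = c' j b a)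
      ∧ (∀ a : Fin n → Fin s, c i b a = c' i b a) :=
  single_layer_repair_general n k d h r s hnk hkd hdn hs lam mu hlam hmu hlammu c c' hc hc' i b hb
    hb' R hR hdownload
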